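/- Let p ∈ (0, 1/2) and consider the 3×3 real matrices O(φ) = [[1,0,0],[0,cos φ,−sin φ],[0,sin φ,cos φ]] and M = diag(1−2p, 1−2p, 1). For φ → 0, the three eigenvalues of O(φ)M are 1−2p, (1−2p)(1 + (1−p)φ²/(2p)) + O(φ³), and 1 − (1−p)φ²/(2p) + O(φ³). In particular, the largest eigenvalue of O(φ)M equals 1 − (1−p)φ²/(2p) + O(φ³) and is strictly less than 1 for all sufficiently small φ ≠ 0. -/
import Mathlib


open Matrix Filter

noncomputable section

/-- The Bloch rotation of `exp(−iφX/2)`. -/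
def rotX (φ : ℝ) : Matrix (Fin 3) (Fin 3) ℝ :=
  !![1, 0, 0; 0, Real.cos φ, -Real.sin φ; 0, Real.sin φ, Real.cos φ]

/-- The Bloch matrix of the dephasing channel `ρ ↦ (1−p)ρ + pZρZ`. -/
def dephasingM (p : ℝ) : Matrix (Fin 3) (Fin 3) ℝ :=
  Matrix.diagonal ![1 - 2 * p, 1 - 2 * p, 1]

namespace RotDephAux

open Polynomial

/-- square-root part of the eigenvalues -/
def sqP (p φ : ℝ) : ℝ := Real.sqrt (p ^ 2 - (1 - p) ^ 2 * Real.sin φ ^ 2)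

/-- remainder for the top eigenvalue -/
def gF (p φ : ℝ) : ℝ :=
  (1 - p) * Real.cos φ + sqP p φ - (1 - (1 - p) * φ ^ 2 / (2 * p))

/-- remainder for the middle eigenvalue -/
def fF (p φ : ℝ) : ℝ :=
  (1 - p) * Real.cos φ - sqP p φ - (1 - 2 * p) * (1 + (1 - p) * φ ^ 2 / (2 * p))

lemma prod_eq (p φ : ℝ) : rotX φ * dephasingM p =
    !![1 - 2 * p, 0, 0;
       0, (1 - 2 * p) * Real.cos φ, -Real.sin φ;
       0, (1 - 2 * p) * Real.sin φ, Real.cos φ] := by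
  ext i j
  rw [dephasingM, Matrix.mul_diagonal]
  fin_cases i <;> fin_cases j <;>
    simp [rotX, Matrix.vecHead, Matrix.vecTail] <;> ring

lemma charpoly_explicit (a b c d e : ℝ) :
    (!![a, 0, 0; 0, b, c; 0, d, e] : Matrix (Fin 3) (Fin 3) ℝ).charpoly
      = (X - C a) * (X ^ 2 - C (b + e) * X + C (b * e - c * d)) := by
  rw [Matrix.charpoly, Matrix.det_fin_three]
  simp [charmatrix_apply_eq, charmatrix_apply_ne]
  ring

lemma cos_taylor {x : ℝ} (hx : |x| ≤ 1) :
    |Real.cos x - 1 + x ^ 2 / 2| ≤ |x| ^ 3 := by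
  have h := Real.cos_bound hx
  have h4 : |x| ^ 4 ≤ |x| ^ 3 := by
    have := abs_nonneg x
    nlinarith [pow_nonneg (abs_nonneg x) 3]
  calc |Real.cos x - 1 + x ^ 2 / 2| = |Real.cos x - (1 - x ^ 2 / 2)| := by ring_nf
    _ ≤ |x| ^ 4 * (5 / 96) := h
    _ ≤ |x| ^ 3 := by nlinarith [pow_nonneg (abs_nonneg x) 4]

lemma sin_taylor {x : ℝ} (hx : |x| ≤ 1) : |Real.sin x - x| ≤ |x| ^ 3 := by
  have h := Real.sin_bound hx
  have h3 : |x ^ 3| = |x| ^ 3 := abs_pow x 3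
  have h4 : |x| ^ 4 ≤ |x| ^ 3 := by
    have := abs_nonneg x
    nlinarith [pow_nonneg (abs_nonneg x) 3]
  have : |Real.sin x - x| ≤ |Real.sin x - (x - x ^ 3 / 6)| + |x ^ 3 / 6| := by
    have he : Real.sin x - x = (Real.sin x - (x - x ^ 3 / 6)) - x ^ 3 / 6 := by ring
    rw [he]
    exact abs_sub _ _
  rw [abs_div, h3] at this
  have h5 : |(6 : ℝ)| = 6 := by norm_num
  rw [h5] at this
  nlinarith [pow_nonneg (abs_nonneg x) 3, pow_nonneg (abs_nonneg x) 4]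

lemma sin_sq_le (φ : ℝ) : Real.sin φ ^ 2 ≤ φ ^ 2 := by
  have h := Real.abs_sin_le_abs (x := φ)
  calc Real.sin φ ^ 2 = |Real.sin φ| ^ 2 := (sq_abs _).symm
    _ ≤ |φ| ^ 2 := pow_le_pow_left₀ (abs_nonneg _) h 2
    _ = φ ^ 2 := sq_abs φ

section main

variable {p : ℝ} (hp : 0 < p) (hp' : p < 1 / 2)

include hp hp'

lemma basic {φ : ℝ} (hφ : |φ| ≤ p / 2) :
    φ ^ 2 ≤ p ^ 2 / 4 ∧ |φ| ≤ 1 := by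
  have h1 : φ ^ 2 = |φ| ^ 2 := (sq_abs φ).symm
  constructor
  · nlinarith [abs_nonneg φ]
  · nlinarith [abs_nonneg φ]

lemma sq_bounds {φ : ℝ} (hφ : |φ| ≤ p / 2) :
    p / 2 ≤ sqP p φ ∧ sqP p φ ≤ p ∧
      sqP p φ ^ 2 = p ^ 2 - (1 - p) ^ 2 * Real.sin φ ^ 2 := by
  have hs : Real.sin φ ^ 2 ≤ φ ^ 2 := sin_sq_le φ
  have hφ2 := (basic hp hp' hφ).1
  have ha : (1 - p) ^ 2 ≤ 1 := by nlinarith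
  have hu_lb : 3 * p ^ 2 / 4 ≤ p ^ 2 - (1 - p) ^ 2 * Real.sin φ ^ 2 := by
    nlinarith [sq_nonneg (Real.sin φ)]
  have hu_nn : 0 ≤ p ^ 2 - (1 - p) ^ 2 * Real.sin φ ^ 2 := by nlinarith
  have hu_ub : p ^ 2 - (1 - p) ^ 2 * Real.sin φ ^ 2 ≤ p ^ 2 := by
    nlinarith [sq_nonneg (Real.sin φ), sq_nonneg (1 - p)]
  refine ⟨?_, ?_, Real.sq_sqrt hu_nn⟩
  · rw [sqP, Real.le_sqrt (by positivity) hu_nn]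
    nlinarith
  · rw [sqP]
    calc Real.sqrt (p ^ 2 - (1 - p) ^ 2 * Real.sin φ ^ 2) ≤ Real.sqrt (p ^ 2) :=
        Real.sqrt_le_sqrt hu_ub
      _ = p := Real.sqrt_sq hp.le

set_option maxHeartbeats 1000000 in
lemma gF_bound {φ : ℝ} (hφ : |φ| ≤ p / 2) : |gF p φ| ≤ (2 / p ^ 3) * |φ| ^ 3 := by
  obtain ⟨hφ2, hφ1⟩ := basic hp hp' hφ
  obtain ⟨hr_lb, hr_ub, hr2⟩ := sq_bounds hp hp' hφ
  set c := Real.cos φ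
  set s := Real.sin φ
  set r := sqP p φ with hr
  -- decomposition of 2p * g
  have hdecomp : gF p φ * (2 * p) =
      2 * p * (1 - p) * (c - 1 + φ ^ 2 / 2) + (2 * p * (r - p) + (1 - p) ^ 2 * φ ^ 2) := by
    rw [gF]
    field_simp
    ring
  -- the correction term E3
  set E3 := 2 * p * (r - p) + (1 - p) ^ 2 * φ ^ 2 with hE3
  have hNid : E3 * (r + p) =
      (1 - p) ^ 2 * (φ ^ 2 * (r - p) + 2 * p * (φ ^ 2 - s ^ 2)) := by
    rw [hE3]; linear_combination (2 * p) * hr2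
  -- bound |r - p| ≤ φ^2 / p
  have hs_abs : |s| ≤ |φ| := Real.abs_sin_le_abs
  have hs2 : s ^ 2 ≤ φ ^ 2 := sin_sq_le φ
  have hrp : p - r ≤ φ ^ 2 / p := by
    have h1 : (p - r) * (p + r) = (1 - p) ^ 2 * s ^ 2 := by linear_combination -hr2
    have ha2 : (1 - p) ^ 2 ≤ 1 := by nlinarith
    have h2 : (1 - p) ^ 2 * s ^ 2 ≤ φ ^ 2 := by
      have := mul_le_mul_of_nonneg_right ha2 (sq_nonneg s)
      nlinarith
    rw [le_div_iff₀ hp]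
    nlinarith [hr_lb, hr_ub]
  -- bound |φ^2 - s^2| ≤ 2 φ^4
  have hsin := sin_taylor hφ1
  have hφs : |φ ^ 2 - s ^ 2| ≤ 2 * φ ^ 4 := by
    have h1 : |φ ^ 2 - s ^ 2| = |φ - s| * |φ + s| := by
      rw [← abs_mul]; ring_nf
    have h2 : |φ - s| ≤ |φ| ^ 3 := by
      rw [← abs_neg]; simpa [neg_sub] using hsin
    have h3 : |φ + s| ≤ 2 * |φ| := by
      calc |φ + s| ≤ |φ| + |s| := abs_add_le _ _
        _ ≤ 2 * |φ| := by linarith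
    calc |φ ^ 2 - s ^ 2| = |φ - s| * |φ + s| := h1
      _ ≤ |φ| ^ 3 * (2 * |φ|) := by
          exact mul_le_mul h2 h3 (abs_nonneg _) (pow_nonneg (abs_nonneg _) 3)
      _ = 2 * |φ| ^ 4 := by ring
      _ = 2 * φ ^ 4 := by
          rw [← abs_pow, abs_of_nonneg (by positivity : (0:ℝ) ≤ φ ^ 4)]
  -- bound |E3|
  have hEbound : |E3| ≤ 2 * φ ^ 4 / p ^ 2 := by
    have hN : |E3 * (r + p)| ≤ 2 * φ ^ 4 / p := by
      rw [hNid, abs_mul]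
      have h1 : |(1 - p) ^ 2| ≤ 1 := by rw [abs_of_nonneg (sq_nonneg _)]; nlinarith
      have h2 : |φ ^ 2 * (r - p) + 2 * p * (φ ^ 2 - s ^ 2)| ≤ 2 * φ ^ 4 / p := by
        calc |φ ^ 2 * (r - p) + 2 * p * (φ ^ 2 - s ^ 2)|
            ≤ |φ ^ 2 * (r - p)| + |2 * p * (φ ^ 2 - s ^ 2)| := abs_add_le _ _
          _ = φ ^ 2 * |r - p| + 2 * p * |φ ^ 2 - s ^ 2| := by
              rw [abs_mul, abs_mul, abs_of_nonneg (sq_nonneg φ)]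
              have : |(2 : ℝ) * p| = 2 * p := abs_of_pos (by linarith)
              rw [this]
          _ ≤ φ ^ 2 * (φ ^ 2 / p) + 2 * p * (2 * φ ^ 4) := by
              have hrabs : |r - p| ≤ φ ^ 2 / p := by
                rw [abs_le]
                constructor
                · linarith [hrp]
                · have : r - p ≤ 0 := by linarith
                  have : (0 : ℝ) ≤ φ ^ 2 / p := by positivity
                  linarith
              have := sq_nonneg φ
              gcongr
          _ ≤ 2 * φ ^ 4 / p := by
              have h4p : 4 * p ^ 2 ≤ 1 := by nlinarith
              have hφ4 : (0:ℝ) ≤ φ ^ 4 := by positivity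
              have e1 : φ ^ 2 * (φ ^ 2 / p) = φ ^ 4 / p := by ring
              have e2 : 2 * p * (2 * φ ^ 4) ≤ φ ^ 4 / p := by
                rw [le_div_iff₀ hp]
                nlinarith [mul_le_mul_of_nonneg_right h4p hφ4]
              rw [e1]
              have e3 : 2 * φ ^ 4 / p = φ ^ 4 / p + φ ^ 4 / p := by ring
              rw [e3]
              linarith
      calc |(1 - p) ^ 2| * |φ ^ 2 * (r - p) + 2 * p * (φ ^ 2 - s ^ 2)|
          ≤ 1 * (2 * φ ^ 4 / p) := by
            exact mul_le_mul h1 h2 (abs_nonneg _) (by norm_num)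
        _ = 2 * φ ^ 4 / p := by ring
    have hrpos : 0 < r + p := by linarith
    rw [abs_mul, abs_of_pos hrpos] at hN
    have h3 : (3 : ℝ) * p / 2 ≤ r + p := by linarith
    have h4 : |E3| * (3 * p / 2) ≤ 2 * φ ^ 4 / p :=
      le_trans (by nlinarith [abs_nonneg E3]) hN
    rw [le_div_iff₀ hp] at h4
    rw [le_div_iff₀ (by positivity : (0:ℝ) < p ^ 2)]
    nlinarith [abs_nonneg E3, hr_lb, hr_ub]
  -- assemble
  have hcos := cos_taylor hφ1
  have hterm1 : |2 * p * (1 - p) * (c - 1 + φ ^ 2 / 2)| ≤ 2 * p * |φ| ^ 3 := by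
    rw [abs_mul]
    have h1 : |2 * p * (1 - p)| ≤ 2 * p := by
      rw [abs_of_pos (by nlinarith)]; nlinarith
    calc |2 * p * (1 - p)| * |c - 1 + φ ^ 2 / 2| ≤ (2 * p) * |φ| ^ 3 :=
        mul_le_mul h1 hcos (abs_nonneg _) (by linarith)
      _ = 2 * p * |φ| ^ 3 := by ring
  have hg2p : |gF p φ| * (2 * p) ≤ 2 * p * |φ| ^ 3 + 2 * φ ^ 4 / p ^ 2 := by
    have : |gF p φ * (2 * p)| ≤ 2 * p * |φ| ^ 3 + 2 * φ ^ 4 / p ^ 2 := by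
      rw [hdecomp]
      calc |2 * p * (1 - p) * (c - 1 + φ ^ 2 / 2) + E3|
          ≤ |2 * p * (1 - p) * (c - 1 + φ ^ 2 / 2)| + |E3| := abs_add_le _ _
        _ ≤ 2 * p * |φ| ^ 3 + 2 * φ ^ 4 / p ^ 2 := by gcongr
    rw [abs_mul, abs_of_pos (by linarith : (0:ℝ) < 2 * p)] at this
    exact this
  -- φ^4 ≤ |φ|^3 since |φ| ≤ 1
  have hφ4 : φ ^ 4 ≤ |φ| ^ 3 := by
    have : φ ^ 4 = |φ| ^ 4 := by rw [← abs_pow]; rw [abs_of_nonneg (by positivity)]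
    rw [this]
    nlinarith [pow_nonneg (abs_nonneg φ) 3, abs_nonneg φ]
  have hfinal : |gF p φ| * (2 * p) ≤ (2 * p + 2 / p ^ 2) * |φ| ^ 3 := by
    have h1 : 2 * φ ^ 4 / p ^ 2 ≤ (2 / p ^ 2) * |φ| ^ 3 := by
      calc 2 * φ ^ 4 / p ^ 2 = 2 * φ ^ 4 * (p ^ 2)⁻¹ := by ring
        _ ≤ 2 * |φ| ^ 3 * (p ^ 2)⁻¹ := by
            have : (0:ℝ) ≤ (p ^ 2)⁻¹ := by positivity
            nlinarith
        _ = (2 / p ^ 2) * |φ| ^ 3 := by ring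
    linarith
  have hC : 2 * p + 2 / p ^ 2 ≤ (2 / p ^ 3) * (2 * p) := by
    rw [div_mul_eq_mul_div, le_div_iff₀ (by positivity)]
    have hp3 : p ^ 3 ≤ 1 := by nlinarith
    have hp4 : p ^ 4 ≤ 1 := by nlinarith
    have h2 : (2 * p) * p ^ 3 ≤ 2 := by nlinarith
    have h3 : (2 / p ^ 2) * p ^ 3 = 2 * p := by field_simp
    nlinarith
  have hle := le_trans hfinal
    (mul_le_mul_of_nonneg_right hC (pow_nonneg (abs_nonneg φ) 3))
  have h2p : (0:ℝ) < 2 * p := by linarith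
  have hle2 : |gF p φ| * (2 * p) ≤ (2 / p ^ 3 * |φ| ^ 3) * (2 * p) := by linarith [hle]
  exact le_of_mul_le_mul_right hle2 h2p

lemma fF_eq (φ : ℝ) : fF p φ = 2 * (1 - p) * (Real.cos φ - 1 + φ ^ 2 / 2) - gF p φ := by
  rw [fF, gF]
  field_simp
  ring

lemma fF_bound {φ : ℝ} (hφ : |φ| ≤ p / 2) : |fF p φ| ≤ (4 / p ^ 3) * |φ| ^ 3 := by
  obtain ⟨hφ2, hφ1⟩ := basic hp hp' hφ
  have hg := gF_bound hp hp' hφ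
  have hcos := cos_taylor hφ1
  rw [fF_eq hp hp']
  have h1 : |2 * (1 - p) * (Real.cos φ - 1 + φ ^ 2 / 2)| ≤ 2 * |φ| ^ 3 := by
    rw [abs_mul]
    have h0 : |2 * (1 - p)| ≤ 2 := by rw [abs_of_pos (by linarith)]; linarith
    exact mul_le_mul h0 hcos (abs_nonneg _) (by norm_num)
  have h2 := abs_sub (2 * (1 - p) * (Real.cos φ - 1 + φ ^ 2 / 2)) (gF p φ)
  have hp3 : p ^ 3 ≤ 1 := pow_le_one₀ hp.le (by linarith)
  have h4 : (2 : ℝ) ≤ 2 / p ^ 3 := by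
    rw [le_div_iff₀ (by positivity)]; nlinarith
  have h5 : 0 ≤ (2 / p ^ 3 - 2) * |φ| ^ 3 :=
    mul_nonneg (by linarith) (pow_nonneg (abs_nonneg φ) 3)
  have h6 : (4:ℝ) / p ^ 3 * |φ| ^ 3 = 2 / p ^ 3 * |φ| ^ 3 + 2 / p ^ 3 * |φ| ^ 3 := by
    ring
  have h7 : 2 * |φ| ^ 3 ≤ 2 / p ^ 3 * |φ| ^ 3 := by linarith [h5]
  rw [h6]
  linarith [h1, h2, hg, h7]

/-- Factorization of the characteristic polynomial. -/
lemma charpoly_roots {φ : ℝ} (hφ : |φ| ≤ p / 2) :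
    (rotX φ * dephasingM p).charpoly.roots =
      ({1 - 2 * p, (1 - p) * Real.cos φ - sqP p φ,
        (1 - p) * Real.cos φ + sqP p φ} : Multiset ℝ) := by
  obtain ⟨hr_lb, hr_ub, hr2⟩ := sq_bounds hp hp' hφ
  set c := Real.cos φ
  set s := Real.sin φ
  set r := sqP p φ
  set lm := (1 - p) * c - r with hlm
  set lp := (1 - p) * c + r with hlp
  have hsum : (1 - 2 * p) * c + c = lm + lp := by rw [hlm, hlp]; ring
  have hprod : (1 - 2 * p) * c * c - -s * ((1 - 2 * p) * s) = lm * lp := by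
    have hcs : s ^ 2 + c ^ 2 = 1 := Real.sin_sq_add_cos_sq φ
    rw [hlm, hlp]
    linear_combination (-(p ^ 2)) * hcs + hr2
  have hfac : (rotX φ * dephasingM p).charpoly =
      (({1 - 2 * p, lm, lp} : Multiset ℝ).map fun x => X - C x).prod := by
    rw [prod_eq, charpoly_explicit]
    simp only [Multiset.insert_eq_cons, Multiset.map_cons, Multiset.map_singleton,
      Multiset.prod_cons, Multiset.prod_singleton]
    rw [hsum, hprod, C_add, C_mul]
    ring
  rw [hfac, roots_multiset_prod_X_sub_C]

end main

end RotDephAux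

/-- For `p ∈ (0, 1/2)` and `φ → 0`, the three eigenvalues of
`O(φ)M` are `1−2p`, `(1−2p)(1 + (1−p)φ²/(2p)) + O(φ³)` and
`1 − (1−p)φ²/(2p) + O(φ³)`; the last one is the largest and is strictly less than `1`
for all sufficiently small `φ ≠ 0`. -/
theorem rot_dephasing_eigenvalues (p : ℝ) (hp : 0 < p) (hp' : p < 1 / 2) :
    ∃ f g : ℝ → ℝ,
      Asymptotics.IsBigO (nhds (0 : ℝ)) f (fun φ => φ ^ 3) ∧
      Asymptotics.IsBigO (nhds (0 : ℝ)) g (fun φ => φ ^ 3) ∧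
      (∀ᶠ φ in nhds (0 : ℝ),
        (rotX φ * dephasingM p).charpoly.roots =
          ({1 - 2 * p,
            (1 - 2 * p) * (1 + (1 - p) * φ ^ 2 / (2 * p)) + f φ,
            1 - (1 - p) * φ ^ 2 / (2 * p) + g φ} : Multiset ℝ)) ∧
      (∀ᶠ φ in nhdsWithin (0 : ℝ) {0}ᶜ,
        (∀ μ ∈ (rotX φ * dephasingM p).charpoly.roots,
            μ ≤ 1 - (1 - p) * φ ^ 2 / (2 * p) + g φ) ∧
          1 - (1 - p) * φ ^ 2 / (2 * p) + g φ < 1) := by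
  classical
  refine ⟨RotDephAux.fF p, RotDephAux.gF p, ?_, ?_, ?_, ?_⟩
  · -- f is O(φ^3)
    rw [Asymptotics.isBigO_iff]
    refine ⟨4 / p ^ 3, ?_⟩
    rw [Metric.eventually_nhds_iff]
    refine ⟨p / 2, by positivity, fun φ hφ => ?_⟩
    rw [Real.dist_eq, sub_zero] at hφ
    have := RotDephAux.fF_bound hp hp' hφ.le
    simpa [abs_pow] using this
  · rw [Asymptotics.isBigO_iff]
    refine ⟨2 / p ^ 3, ?_⟩
    rw [Metric.eventually_nhds_iff]
    refine ⟨p / 2, by positivity, fun φ hφ => ?_⟩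
    rw [Real.dist_eq, sub_zero] at hφ
    have := RotDephAux.gF_bound hp hp' hφ.le
    simpa [abs_pow] using this
  · -- roots identity eventually
    rw [Metric.eventually_nhds_iff]
    refine ⟨p / 2, by positivity, fun φ hφ => ?_⟩
    rw [Real.dist_eq, sub_zero] at hφ
    rw [RotDephAux.charpoly_roots hp hp' hφ.le]
    have h1 : (1 - 2 * p) * (1 + (1 - p) * φ ^ 2 / (2 * p)) + RotDephAux.fF p φ
        = (1 - p) * Real.cos φ - RotDephAux.sqP p φ := by
      rw [RotDephAux.fF]; ring
    have h2 : 1 - (1 - p) * φ ^ 2 / (2 * p) + RotDephAux.gF p φ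
        = (1 - p) * Real.cos φ + RotDephAux.sqP p φ := by
      rw [RotDephAux.gF]; ring
    rw [h1, h2]
  · -- maximality and < 1
    rw [eventually_nhdsWithin_iff]
    rw [Metric.eventually_nhds_iff]
    refine ⟨p / 2, by positivity, fun φ hφd hφ0 => ?_⟩
    rw [Real.dist_eq, sub_zero] at hφd
    have hφne : φ ≠ 0 := by simpa using hφ0
    have hφ : |φ| ≤ p / 2 := hφd.le
    obtain ⟨hr_lb, hr_ub, hr2⟩ := RotDephAux.sq_bounds hp hp' hφ
    have h2 : 1 - (1 - p) * φ ^ 2 / (2 * p) + RotDephAux.gF p φ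
        = (1 - p) * Real.cos φ + RotDephAux.sqP p φ := by
      rw [RotDephAux.gF]; ring
    have hcle : Real.cos φ ≤ 1 := Real.cos_le_one φ
    have hcge : 1 - φ ^ 2 / 2 ≤ Real.cos φ := Real.one_sub_sq_div_two_le_cos
    have hφ2 := (RotDephAux.basic hp hp' hφ).1
    constructor
    · intro μ hμ
      rw [RotDephAux.charpoly_roots hp hp' hφ, h2] at *
      simp only [Multiset.insert_eq_cons, Multiset.mem_cons, Multiset.mem_singleton] at hμ
      rcases hμ with h | h | h
      · subst h; nlinarith
      · subst h; nlinarith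
      · subst h; nlinarith
    · rw [h2]
      -- sin φ ≠ 0, so sqP < p, cos ≤ 1 gives < 1
      have hπ : (3 : ℝ) < Real.pi := Real.pi_gt_three
      have habs := abs_le.mp hφ
      have hφlt : -Real.pi < φ ∧ φ < Real.pi := by
        constructor <;> nlinarith [habs.1, habs.2, hπ]
      have hsne : Real.sin φ ≠ 0 := fun h =>
        hφne ((Real.sin_eq_zero_iff_of_lt_of_lt hφlt.1 hφlt.2).mp h)
      have hs2pos : 0 < Real.sin φ ^ 2 := by positivity
      have hrlt : RotDephAux.sqP p φ < p := by
        rw [RotDephAux.sqP, Real.sqrt_lt' hp]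
        nlinarith [sq_nonneg (1 - p)]
      nlinarith

end
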